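/- (Conservation laws for isothermic conformally constrained minimal immersions.) Let U ⊆ ℝ² be open and Φ : U → S³ ⊂ ℝ⁴ a smooth conformal immersion into S³ with conformal factor e^λ, mean curvature H and trace-free Weingarten coefficients I⁰₁₁, I⁰₁₂. Suppose there is a constant t ∈ ℝ such that on U: H = e^{−4λ} I⁰₁₁ and I⁰₁₂ = −t · I⁰₁₁. Then, writing G := I⁰₁₁, the following conservation laws hold on U: ∂_{x₁}[ (1 + t² − e^{−4λ}) G ] = 2 ∂_{x₁}(e^{−2λ}) G − 2t ∂_{x₂}(e^{−2λ}) G and ∂_{x₂}[ (1 + t² − e^{−4λ}) G ] = −2t ∂_{x₁}(e^{−2λ}) G − 2 ∂_{x₂}(e^{−2λ}) G. -/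

import Mathlib

noncomputable section

open Real MeasureTheory
open scoped ENNReal RealInnerProductSpace

/-- The plane `ℝ²`. -/
abbrev RR2 := ℝ × ℝ
/-- Euclidean `ℝ⁴`. -/
abbrev RR4 := EuclideanSpace ℝ (Fin 4)

/-- Partial derivative in the `x₁` direction of an `ℝ⁴`-valued map on `ℝ²`. -/
def d1 (f : RR2 → RR4) (x : RR2) : RR4 := fderiv ℝ f x (1, 0)
/-- Partial derivative in the `x₂` direction of an `ℝ⁴`-valued map on `ℝ²`. -/
def d2 (f : RR2 → RR4) (x : RR2) : RR4 := fderiv ℝ f x (0, 1)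
/-- Partial derivative in the `x₁` direction of a scalar map on `ℝ²`. -/
def d1s (f : RR2 → ℝ) (x : RR2) : ℝ := fderiv ℝ f x (1, 0)
/-- Partial derivative in the `x₂` direction of a scalar map on `ℝ²`. -/
def d2s (f : RR2 → ℝ) (x : RR2) : ℝ := fderiv ℝ f x (0, 1)

/-- Determinant of four vectors of `ℝ⁴`. -/
def det4 (a b c d : RR4) : ℝ :=
  Matrix.det (Matrix.of ![(fun i => a i), (fun i => b i), (fun i => c i), (fun i => d i)])

/-- `Φ : U → S³ ⊂ ℝ⁴` is a smooth conformal immersion into `S³` with conformal factor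
`e^lam` and (positively oriented) Gauss map `n`. -/
structure IsConformalImmersionS3 (U : Set RR2) (Φ : RR2 → RR4) (lam : RR2 → ℝ)
    (n : RR2 → RR4) : Prop where
  smooth_Phi : ContDiffOn ℝ (⊤ : ℕ∞) Φ U
  smooth_lam : ContDiffOn ℝ (⊤ : ℕ∞) lam U
  smooth_n : ContDiffOn ℝ (⊤ : ℕ∞) n U
  mem_sphere : ∀ x ∈ U, ‖Φ x‖ = 1
  conf_orth : ∀ x ∈ U, ⟪d1 Φ x, d2 Φ x⟫ = 0
  conf_norm1 : ∀ x ∈ U, ‖d1 Φ x‖ = exp (lam x)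
  conf_norm2 : ∀ x ∈ U, ‖d2 Φ x‖ = exp (lam x)
  n_norm : ∀ x ∈ U, ‖n x‖ = 1
  n_orth_Phi : ∀ x ∈ U, ⟪n x, Φ x⟫ = 0
  n_orth_d1 : ∀ x ∈ U, ⟪n x, d1 Φ x⟫ = 0
  n_orth_d2 : ∀ x ∈ U, ⟪n x, d2 Φ x⟫ = 0
  oriented : ∀ x ∈ U, 0 < det4 (Φ x) (d1 Φ x) (d2 Φ x) (n x)

/-- Second fundamental form coefficient `I₁₁ = n·∂²_{x₁x₁}Φ`. -/
def I11 (Φ n : RR2 → RR4) (x : RR2) : ℝ := ⟪n x, d1 (d1 Φ) x⟫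
/-- Second fundamental form coefficient `I₁₂ = n·∂²_{x₁x₂}Φ`. -/
def I12 (Φ n : RR2 → RR4) (x : RR2) : ℝ := ⟪n x, d2 (d1 Φ) x⟫
/-- Second fundamental form coefficient `I₂₂ = n·∂²_{x₂x₂}Φ`. -/
def I22 (Φ n : RR2 → RR4) (x : RR2) : ℝ := ⟪n x, d2 (d2 Φ) x⟫

/-- Mean curvature `H = (1/2) e^{-2λ} (I₁₁ + I₂₂)`. -/
def meanCurv (Φ : RR2 → RR4) (lam : RR2 → ℝ) (n : RR2 → RR4) (x : RR2) : ℝ :=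
  (1 / 2) * exp (-(2 * lam x)) * (I11 Φ n x + I22 Φ n x)

/-- Trace-free Weingarten coefficient `I⁰₁₁ = (I₁₁ - I₂₂)/2`. -/
def I011 (Φ n : RR2 → RR4) (x : RR2) : ℝ := (I11 Φ n x - I22 Φ n x) / 2
/-- Trace-free Weingarten coefficient `I⁰₁₂ = I₁₂`. -/
def I012 (Φ n : RR2 → RR4) (x : RR2) : ℝ := I12 Φ n x

/-!
Differentiating `I₁₁ = n·∂₁₁Φ`, `I₁₂`, `I₂₂` and using the symmetry of third derivatives, the
Weingarten equations `∂ₖn = -e^{-2λ} Σₗ Iₖₗ ∂ₗΦ` (read off in the orthogonal frame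
`Φ, ∂₁Φ, ∂₂Φ, n`) and the Christoffel symbols of the conformal metric `e^{2λ}(dx₁² + dx₂²)` give
the Codazzi equations
`∂₂I₁₁ - ∂₁I₁₂ = (I₁₁ + I₂₂) ∂₂λ` and `∂₁I₂₂ - ∂₂I₁₂ = (I₁₁ + I₂₂) ∂₁λ`.
With `A = e^{-2λ}` the two hypotheses say `I₁₁ = (1 + A)G`, `I₂₂ = (A - 1)G`, `I₁₂ = -tG`, and
`(I₁₁ + I₂₂) ∂λ = -G ∂A`, so Codazzi becomes two linear relations between `∂G` and `∂A`;
the conservation laws are linear combinations of them.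
-/

open Filter Topology

section OrthogonalBasis

variable {ι E : Type*} [Fintype ι] [NormedAddCommGroup E] [InnerProductSpace ℝ E]
  [FiniteDimensional ℝ E]

theorem eq_sum_inner_smul_of_pairwise_inner_eq_zero {b : ι → E} (hb0 : ∀ i, b i ≠ 0)
    (hb : Pairwise fun i j => ⟪b i, b j⟫ = 0) (hcard : Fintype.card ι = Module.finrank ℝ E)
    (v : E) : v = ∑ i, (⟪b i, v⟫ / ‖b i‖ ^ 2) • b i := by
  refine InnerProductSpace.ext_inner_left_basis (basisOfLinearIndependentOfCardEqFinrank' b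
    (linearIndependent_of_ne_zero_of_inner_eq_zero hb0 hb) hcard) fun j => ?_
  rw [coe_basisOfLinearIndependentOfCardEqFinrank', inner_sum,
    Finset.sum_eq_single j (fun i _ hij => by rw [real_inner_smul_right, hb hij.symm, mul_zero])
      (by simp), real_inner_smul_right, real_inner_self_eq_norm_sq,
    div_mul_cancel₀ _ (pow_ne_zero 2 (norm_ne_zero_iff.mpr (hb0 j)))]

end OrthogonalBasis

section Calculus

variable {E F : Type*} [NormedAddCommGroup E] [NormedSpace ℝ E]
  [NormedAddCommGroup F] [InnerProductSpace ℝ F] {U : Set E} {x : E}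

theorem ContDiffOn.differentiableAt_of_isOpen {G : Type*} [NormedAddCommGroup G]
    [NormedSpace ℝ G] {f : E → G} (hf : ContDiffOn ℝ (⊤ : ℕ∞) f U) (hU : IsOpen U)
    (hx : x ∈ U) : DifferentiableAt ℝ f x :=
  (hf.contDiffAt (hU.mem_nhds hx)).differentiableAt (by simp)

theorem fderiv_fun_mul_apply {f g : E → ℝ} (hf : DifferentiableAt ℝ f x)
    (hg : DifferentiableAt ℝ g x) (v : E) :
    fderiv ℝ (fun y => f y * g y) x v = f x * fderiv ℝ g x v + fderiv ℝ f x v * g x := by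
  rw [fderiv_fun_mul hf hg]
  simp [mul_comm]

theorem fderiv_exp_neg_two_mul_apply {lam : E → ℝ} (hlam : DifferentiableAt ℝ lam x) (v : E) :
    fderiv ℝ (fun y => exp (-(2 * lam y))) x v = -2 * exp (-(2 * lam x)) * fderiv ℝ lam x v := by
  rw [fderiv_exp (f := fun y => -(2 * lam y)) (hlam.const_mul 2).neg, fderiv_fun_neg,
    fderiv_const_mul hlam]
  simp only [smul_apply, neg_apply, smul_eq_mul]
  ring

theorem inner_fderiv_add_inner_fderiv_of_eqOn {f g : E → F} {c : E → ℝ} (hU : IsOpen U)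
    (hx : x ∈ U) (hf : DifferentiableAt ℝ f x) (hg : DifferentiableAt ℝ g x)
    (hc : ∀ y ∈ U, ⟪f y, g y⟫ = c y) (v : E) :
    ⟪f x, fderiv ℝ g x v⟫ + ⟪fderiv ℝ f x v, g x⟫ = fderiv ℝ c x v := by
  rw [← fderiv_inner_apply ℝ hf hg,
    (eventuallyEq_of_mem (hU.mem_nhds hx) hc : (fun y => ⟪f y, g y⟫) =ᶠ[𝓝 x] c).fderiv_eq]

theorem inner_fderiv_add_inner_fderiv_eq_zero {f g : E → F} {k : ℝ} (hU : IsOpen U)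
    (hx : x ∈ U) (hf : DifferentiableAt ℝ f x) (hg : DifferentiableAt ℝ g x)
    (hk : ∀ y ∈ U, ⟪f y, g y⟫ = k) (v : E) :
    ⟪f x, fderiv ℝ g x v⟫ + ⟪fderiv ℝ f x v, g x⟫ = 0 := by
  simpa using inner_fderiv_add_inner_fderiv_of_eqOn hU hx hf hg hk v

theorem inner_fderiv_of_norm_eq_exp {f : E → F} {lam : E → ℝ} (hU : IsOpen U) (hx : x ∈ U)
    (hf : DifferentiableAt ℝ f x) (hlam : DifferentiableAt ℝ lam x)
    (hnorm : ∀ y ∈ U, ‖f y‖ = exp (lam y)) (v : E) :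
    ⟪f x, fderiv ℝ f x v⟫ = exp (lam x) ^ 2 * fderiv ℝ lam x v := by
  have key := inner_fderiv_add_inner_fderiv_of_eqOn hU hx hf hf
    (c := fun y => exp (lam y) * exp (lam y))
    (fun y hy => by rw [real_inner_self_eq_norm_sq, hnorm y hy, sq]) v
  rw [fderiv_fun_mul_apply hlam.exp hlam.exp, fderiv_exp hlam, real_inner_comm (f x)] at key
  simp only [smul_apply, smul_eq_mul] at key
  linear_combination key / 2

end Calculus

section PartialDerivatives

variable {U : Set RR2} {x : RR2}

theorem ContDiffOn.d1 {f : RR2 → RR4} (hf : ContDiffOn ℝ (⊤ : ℕ∞) f U) (hU : IsOpen U) :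
    ContDiffOn ℝ (⊤ : ℕ∞) (d1 f) U :=
  (hf.fderiv_of_isOpen hU (by exact_mod_cast le_top)).clm_apply contDiffOn_const

theorem ContDiffOn.d2 {f : RR2 → RR4} (hf : ContDiffOn ℝ (⊤ : ℕ∞) f U) (hU : IsOpen U) :
    ContDiffOn ℝ (⊤ : ℕ∞) (d2 f) U :=
  (hf.fderiv_of_isOpen hU (by exact_mod_cast le_top)).clm_apply contDiffOn_const

theorem d1_d2_eq_d2_d1 {f : RR2 → RR4} (hf : ContDiffOn ℝ (⊤ : ℕ∞) f U) (hU : IsOpen U)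
    (hx : x ∈ U) : d1 (d2 f) x = d2 (d1 f) x := by
  have hdf : DifferentiableAt ℝ (fderiv ℝ f) x :=
    (hf.fderiv_of_isOpen hU (by exact_mod_cast le_top)).differentiableAt_of_isOpen hU hx
  show fderiv ℝ (fun y => fderiv ℝ f y (0, 1)) x (1, 0)
    = fderiv ℝ (fun y => fderiv ℝ f y (1, 0)) x (0, 1)
  simp only [fderiv_clm_apply hdf (differentiableAt_const _), fderiv_fun_const, Pi.zero_apply,
    ContinuousLinearMap.comp_zero, zero_add, ContinuousLinearMap.flip_apply]
  exact (hf.contDiffAt (hU.mem_nhds hx)).isSymmSndFDerivAt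
    (by rw [minSmoothness_of_isRCLikeNormedField]; exact WithTop.coe_le_coe.mpr le_top) _ _

theorem fderiv_apply_eq_smul_d1_add_smul_d2 (f : RR2 → RR4) (x v : RR2) :
    fderiv ℝ f x v = v.1 • d1 f x + v.2 • d2 f x := by
  conv_lhs => rw [show v = v.1 • ((1, 0) : RR2) + v.2 • (0, 1) by ext <;> simp]
  rw [map_add, map_smul, map_smul, d1, d2]

theorem d1s_inner {f g : RR2 → RR4} (hf : DifferentiableAt ℝ f x)
    (hg : DifferentiableAt ℝ g x) :
    d1s (fun y => ⟪f y, g y⟫) x = ⟪f x, d1 g x⟫ + ⟪d1 f x, g x⟫ :=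
  fderiv_inner_apply ℝ hf hg _

theorem d2s_inner {f g : RR2 → RR4} (hf : DifferentiableAt ℝ f x)
    (hg : DifferentiableAt ℝ g x) :
    d2s (fun y => ⟪f y, g y⟫) x = ⟪f x, d2 g x⟫ + ⟪d2 f x, g x⟫ :=
  fderiv_inner_apply ℝ hf hg _

end PartialDerivatives

theorem exp_neg_four_mul (a : ℝ) : exp (-(4 * a)) = exp (-(2 * a)) * exp (-(2 * a)) := by
  rw [← exp_add]
  ring_nf

theorem I11_add_I22_eq_of_meanCurv_eq {Φ n : RR2 → RR4} {lam : RR2 → ℝ} {y : RR2}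
    (hH : meanCurv Φ lam n y = exp (-(4 * lam y)) * I011 Φ n y) :
    I11 Φ n y + I22 Φ n y = 2 * exp (-(2 * lam y)) * I011 Φ n y := by
  rw [meanCurv, exp_neg_four_mul] at hH
  refine mul_left_cancel₀ (exp_pos (-(2 * lam y))).ne' ?_
  linear_combination 2 * hH

namespace IsConformalImmersionS3

variable {U : Set RR2} {Φ : RR2 → RR4} {lam : RR2 → ℝ} {n : RR2 → RR4} {x : RR2}

theorem inner_Phi_fderiv (h : IsConformalImmersionS3 U Φ lam n) (hU : IsOpen U) (hx : x ∈ U)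
    (v : RR2) : ⟪Φ x, fderiv ℝ Φ x v⟫ = 0 := by
  have hΦ := h.smooth_Phi.differentiableAt_of_isOpen hU hx
  have key := inner_fderiv_add_inner_fderiv_eq_zero hU hx hΦ hΦ (k := 1)
    (fun y hy => by rw [real_inner_self_eq_norm_sq, h.mem_sphere y hy, one_pow]) v
  rw [real_inner_comm (Φ x)] at key
  linarith

theorem inner_n_fderiv_Phi (h : IsConformalImmersionS3 U Φ lam n) (hx : x ∈ U) (v : RR2) :
    ⟪n x, fderiv ℝ Φ x v⟫ = 0 := by
  rw [fderiv_apply_eq_smul_d1_add_smul_d2, inner_add_right, real_inner_smul_right,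
    real_inner_smul_right, h.n_orth_d1 x hx, h.n_orth_d2 x hx]
  ring

theorem eq_frame_expansion (h : IsConformalImmersionS3 U Φ lam n) (hU : IsOpen U) (hx : x ∈ U)
    (w : RR4) :
    w = ⟪Φ x, w⟫ • Φ x + (exp (lam x) ^ 2)⁻¹ • (⟪d1 Φ x, w⟫ • d1 Φ x + ⟪d2 Φ x, w⟫ • d2 Φ x)
      + ⟪n x, w⟫ • n x := by
  have hP1 := h.inner_Phi_fderiv hU hx (1, 0)
  have hP2 := h.inner_Phi_fderiv hU hx (0, 1)
  have h12 := h.conf_orth x hx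
  have hnP := h.n_orth_Phi x hx
  have hn1 := h.n_orth_d1 x hx
  have hn2 := h.n_orth_d2 x hx
  set b : Fin 4 → RR4 := ![Φ x, d1 Φ x, d2 Φ x, n x]
  have horth : Pairwise fun i j => ⟪b i, b j⟫ = 0 := by
    intro i j hij
    fin_cases i <;> fin_cases j <;> simp_all [b, d1, d2, real_inner_comm]
  have hne : ∀ i, b i ≠ 0 := by
    intro i
    fin_cases i <;> simp [b, ← norm_ne_zero_iff, h.mem_sphere x hx, h.conf_norm1 x hx,
      h.conf_norm2 x hx, h.n_norm x hx, exp_ne_zero]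
  conv_lhs => rw [eq_sum_inner_smul_of_pairwise_inner_eq_zero hne horth (by simp) w]
  simp [b, Fin.sum_univ_four, h.mem_sphere x hx, h.conf_norm1 x hx, h.conf_norm2 x hx,
    h.n_norm x hx, smul_add, smul_smul, div_eq_inv_mul, add_assoc]

theorem fderiv_n_apply (h : IsConformalImmersionS3 U Φ lam n) (hU : IsOpen U) (hx : x ∈ U)
    (v : RR2) :
    fderiv ℝ n x v = -(exp (lam x) ^ 2)⁻¹ •
      (⟪n x, fderiv ℝ (d1 Φ) x v⟫ • d1 Φ x + ⟪n x, fderiv ℝ (d2 Φ) x v⟫ • d2 Φ x) := by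
  have hn := h.smooth_n.differentiableAt_of_isOpen hU hx
  have hΦ := h.smooth_Phi.differentiableAt_of_isOpen hU hx
  have hΦ1 := (h.smooth_Phi.d1 hU).differentiableAt_of_isOpen hU hx
  have hΦ2 := (h.smooth_Phi.d2 hU).differentiableAt_of_isOpen hU hx
  have hP := inner_fderiv_add_inner_fderiv_eq_zero hU hx hn hΦ h.n_orth_Phi v
  have hN := inner_fderiv_add_inner_fderiv_eq_zero hU hx hn hn (k := 1)
    (fun y hy => by rw [real_inner_self_eq_norm_sq, h.n_norm y hy, one_pow]) v
  have h1 := inner_fderiv_add_inner_fderiv_eq_zero hU hx hn hΦ1 h.n_orth_d1 v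
  have h2 := inner_fderiv_add_inner_fderiv_eq_zero hU hx hn hΦ2 h.n_orth_d2 v
  rw [h.inner_n_fderiv_Phi hx, zero_add, real_inner_comm] at hP
  rw [real_inner_comm (n x)] at hN
  rw [real_inner_comm (d1 Φ x)] at h1
  rw [real_inner_comm (d2 Φ x)] at h2
  rw [h.eq_frame_expansion hU hx (fderiv ℝ n x v), hP,
    show ⟪d1 Φ x, fderiv ℝ n x v⟫ = -⟪n x, fderiv ℝ (d1 Φ) x v⟫ by linarith,
    show ⟪d2 Φ x, fderiv ℝ n x v⟫ = -⟪n x, fderiv ℝ (d2 Φ) x v⟫ by linarith,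
    show ⟪n x, fderiv ℝ n x v⟫ = 0 by linarith]
  module

theorem d1_n (h : IsConformalImmersionS3 U Φ lam n) (hU : IsOpen U) (hx : x ∈ U) :
    d1 n x = -(exp (lam x) ^ 2)⁻¹ • (I11 Φ n x • d1 Φ x + I12 Φ n x • d2 Φ x) := by
  rw [I12, ← d1_d2_eq_d2_d1 h.smooth_Phi hU hx]
  exact h.fderiv_n_apply hU hx (1, 0)

theorem d2_n (h : IsConformalImmersionS3 U Φ lam n) (hU : IsOpen U) (hx : x ∈ U) :
    d2 n x = -(exp (lam x) ^ 2)⁻¹ • (I12 Φ n x • d1 Φ x + I22 Φ n x • d2 Φ x) :=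
  h.fderiv_n_apply hU hx (0, 1)

theorem inner_d1_fderiv_d1 (h : IsConformalImmersionS3 U Φ lam n) (hU : IsOpen U) (hx : x ∈ U)
    (v : RR2) : ⟪d1 Φ x, fderiv ℝ (d1 Φ) x v⟫ = exp (lam x) ^ 2 * fderiv ℝ lam x v :=
  inner_fderiv_of_norm_eq_exp hU hx ((h.smooth_Phi.d1 hU).differentiableAt_of_isOpen hU hx)
    (h.smooth_lam.differentiableAt_of_isOpen hU hx) h.conf_norm1 v

theorem inner_d2_fderiv_d2 (h : IsConformalImmersionS3 U Φ lam n) (hU : IsOpen U) (hx : x ∈ U)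
    (v : RR2) : ⟪d2 Φ x, fderiv ℝ (d2 Φ) x v⟫ = exp (lam x) ^ 2 * fderiv ℝ lam x v :=
  inner_fderiv_of_norm_eq_exp hU hx ((h.smooth_Phi.d2 hU).differentiableAt_of_isOpen hU hx)
    (h.smooth_lam.differentiableAt_of_isOpen hU hx) h.conf_norm2 v

theorem inner_d2_d2d1 (h : IsConformalImmersionS3 U Φ lam n) (hU : IsOpen U) (hx : x ∈ U) :
    ⟪d2 Φ x, d2 (d1 Φ) x⟫ = exp (lam x) ^ 2 * d1s lam x := by
  rw [← d1_d2_eq_d2_d1 h.smooth_Phi hU hx]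
  exact h.inner_d2_fderiv_d2 hU hx (1, 0)

theorem inner_d2_d1d1 (h : IsConformalImmersionS3 U Φ lam n) (hU : IsOpen U) (hx : x ∈ U) :
    ⟪d2 Φ x, d1 (d1 Φ) x⟫ = -(exp (lam x) ^ 2 * d2s lam x) := by
  have horth := inner_fderiv_add_inner_fderiv_eq_zero hU hx
    ((h.smooth_Phi.d1 hU).differentiableAt_of_isOpen hU hx)
    ((h.smooth_Phi.d2 hU).differentiableAt_of_isOpen hU hx) h.conf_orth (1, 0)
  have h12 : ⟪d1 Φ x, d1 (d2 Φ) x⟫ = exp (lam x) ^ 2 * d2s lam x := by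
    rw [d1_d2_eq_d2_d1 h.smooth_Phi hU hx]
    exact h.inner_d1_fderiv_d1 hU hx (0, 1)
  rw [real_inner_comm]
  change ⟪d1 Φ x, d1 (d2 Φ) x⟫ + ⟪d1 (d1 Φ) x, d2 Φ x⟫ = 0 at horth
  linarith

theorem inner_d1_d2d2 (h : IsConformalImmersionS3 U Φ lam n) (hU : IsOpen U) (hx : x ∈ U) :
    ⟪d1 Φ x, d2 (d2 Φ) x⟫ = -(exp (lam x) ^ 2 * d1s lam x) := by
  have horth := inner_fderiv_add_inner_fderiv_eq_zero hU hx
    ((h.smooth_Phi.d1 hU).differentiableAt_of_isOpen hU hx)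
    ((h.smooth_Phi.d2 hU).differentiableAt_of_isOpen hU hx) h.conf_orth (0, 1)
  have h21 := h.inner_d2_d2d1 hU hx
  rw [real_inner_comm] at h21
  change ⟪d1 Φ x, d2 (d2 Φ) x⟫ + ⟪d2 (d1 Φ) x, d2 Φ x⟫ = 0 at horth
  linarith

theorem codazzi_d2_I11 (h : IsConformalImmersionS3 U Φ lam n) (hU : IsOpen U) (hx : x ∈ U) :
    d2s (I11 Φ n) x - d1s (I12 Φ n) x = (I11 Φ n x + I22 Φ n x) * d2s lam x := by
  have hn := h.smooth_n.differentiableAt_of_isOpen hU hx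
  have hΦ1 := h.smooth_Phi.d1 hU
  have c11 : ⟪d1 Φ x, d1 (d1 Φ) x⟫ = exp (lam x) ^ 2 * d1s lam x :=
    h.inner_d1_fderiv_d1 hU hx (1, 0)
  have c12 : ⟪d1 Φ x, d2 (d1 Φ) x⟫ = exp (lam x) ^ 2 * d2s lam x :=
    h.inner_d1_fderiv_d1 hU hx (0, 1)
  rw [show I11 Φ n = fun y => ⟪n y, d1 (d1 Φ) y⟫ from rfl,
    show I12 Φ n = fun y => ⟪n y, d2 (d1 Φ) y⟫ from rfl,
    d2s_inner hn ((hΦ1.d1 hU).differentiableAt_of_isOpen hU hx),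
    d1s_inner hn ((hΦ1.d2 hU).differentiableAt_of_isOpen hU hx),
    d1_d2_eq_d2_d1 hΦ1 hU hx, h.d1_n hU hx, h.d2_n hU hx]
  simp only [real_inner_smul_left, inner_add_left, c11, c12, h.inner_d2_d1d1 hU hx,
    h.inner_d2_d2d1 hU hx, I11]
  field_simp
  ring

theorem codazzi_d1_I22 (h : IsConformalImmersionS3 U Φ lam n) (hU : IsOpen U) (hx : x ∈ U) :
    d1s (I22 Φ n) x - d2s (I12 Φ n) x = (I11 Φ n x + I22 Φ n x) * d1s lam x := by
  have hn := h.smooth_n.differentiableAt_of_isOpen hU hx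
  have hΦ2 := h.smooth_Phi.d2 hU
  have c12 : ⟪d1 Φ x, d2 (d1 Φ) x⟫ = exp (lam x) ^ 2 * d2s lam x :=
    h.inner_d1_fderiv_d1 hU hx (0, 1)
  have c22 : ⟪d2 Φ x, d2 (d2 Φ) x⟫ = exp (lam x) ^ 2 * d2s lam x :=
    h.inner_d2_fderiv_d2 hU hx (0, 1)
  have hsymm : d2 (d1 (d2 Φ)) x = d2 (d2 (d1 Φ)) x :=
    show fderiv ℝ (d1 (d2 Φ)) x (0, 1) = fderiv ℝ (d2 (d1 Φ)) x (0, 1) by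
      rw [(eventuallyEq_of_mem (hU.mem_nhds hx)
        fun y hy => d1_d2_eq_d2_d1 h.smooth_Phi hU hy).fderiv_eq]
  rw [show I22 Φ n = fun y => ⟪n y, d2 (d2 Φ) y⟫ from rfl,
    show I12 Φ n = fun y => ⟪n y, d2 (d1 Φ) y⟫ from rfl,
    d1s_inner hn ((hΦ2.d2 hU).differentiableAt_of_isOpen hU hx),
    d2s_inner hn (((h.smooth_Phi.d1 hU).d2 hU).differentiableAt_of_isOpen hU hx),
    d1_d2_eq_d2_d1 hΦ2 hU hx, hsymm, h.d1_n hU hx, h.d2_n hU hx]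
  simp only [real_inner_smul_left, inner_add_left, c12, c22, h.inner_d1_d2d2 hU hx,
    h.inner_d2_d2d1 hU hx, I22]
  field_simp
  ring

theorem differentiableAt_I011 (h : IsConformalImmersionS3 U Φ lam n) (hU : IsOpen U)
    (hx : x ∈ U) : DifferentiableAt ℝ (I011 Φ n) x := by
  have hn := h.smooth_n.differentiableAt_of_isOpen hU hx
  have hI11 := hn.inner ℝ (((h.smooth_Phi.d1 hU).d1 hU).differentiableAt_of_isOpen hU hx)
  have hI22 := hn.inner ℝ (((h.smooth_Phi.d2 hU).d2 hU).differentiableAt_of_isOpen hU hx)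
  unfold I011 I11 I22
  fun_prop

theorem codazzi_of_isothermic_ccms (h : IsConformalImmersionS3 U Φ lam n) (hU : IsOpen U)
    {t : ℝ} (hccms : ∀ x ∈ U, meanCurv Φ lam n x = exp (-(4 * lam x)) * I011 Φ n x)
    (hiso : ∀ x ∈ U, I012 Φ n x = -t * I011 Φ n x) (hx : x ∈ U) :
    (1 + exp (-(2 * lam x))) * d2s (I011 Φ n) x + t * d1s (I011 Φ n) x
        + 2 * I011 Φ n x * d2s (fun y => exp (-(2 * lam y))) x = 0 ∧
      (exp (-(2 * lam x)) - 1) * d1s (I011 Φ n) x + t * d2s (I011 Φ n) x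
        + 2 * I011 Φ n x * d1s (fun y => exp (-(2 * lam y))) x = 0 := by
  set A : RR2 → ℝ := fun y => exp (-(2 * lam y))
  set G := I011 Φ n
  have hG : DifferentiableAt ℝ G x := h.differentiableAt_I011 hU hx
  have hlam := h.smooth_lam.differentiableAt_of_isOpen hU hx
  have hA : DifferentiableAt ℝ A x := (hlam.const_mul 2).neg.exp
  have hG_def : ∀ y, G y = (I11 Φ n y - I22 Φ n y) / 2 := fun _ => rfl
  have hsum : ∀ y ∈ U, I11 Φ n y + I22 Φ n y = 2 * A y * G y :=
    fun y hy => I11_add_I22_eq_of_meanCurv_eq (hccms y hy)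
  have hI11 : I11 Φ n =ᶠ[𝓝 x] fun y => (1 + A y) * G y :=
    eventuallyEq_of_mem (hU.mem_nhds hx) fun y hy => by
      linear_combination (hsum y hy) / 2 - hG_def y
  have hI22 : I22 Φ n =ᶠ[𝓝 x] fun y => (A y - 1) * G y :=
    eventuallyEq_of_mem (hU.mem_nhds hx) fun y hy => by
      linear_combination (hsum y hy) / 2 + hG_def y
  have hI12 : I12 Φ n =ᶠ[𝓝 x] fun y => -t * G y := eventuallyEq_of_mem (hU.mem_nhds hx) hiso
  have hAlam : ∀ v, fderiv ℝ A x v = -2 * A x * fderiv ℝ lam x v :=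
    fderiv_exp_neg_two_mul_apply hlam
  have c1 := h.codazzi_d2_I11 hU hx
  have c2 := h.codazzi_d1_I22 hU hx
  simp only [d1s, d2s] at c1 c2 ⊢
  rw [hsum x hx, hI11.fderiv_eq, hI12.fderiv_eq, fderiv_fun_mul_apply (hA.const_add 1) hG,
    fderiv_const_mul hG] at c1
  rw [hsum x hx, hI22.fderiv_eq, hI12.fderiv_eq, fderiv_fun_mul_apply (hA.sub_const 1) hG,
    fderiv_const_mul hG] at c2
  simp only [fderiv_const_add, fderiv_sub_const, hAlam, smul_apply, smul_eq_mul] at c1 c2 ⊢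
  exact ⟨by linear_combination c1, by linear_combination c2⟩

end IsConformalImmersionS3

/-- **conservation laws for isothermic conformally constrained minimal
immersions.** If a smooth conformal immersion `Φ : U → S³` satisfies `H = e^{-4λ} I⁰₁₁`
and `I⁰₁₂ = -t I⁰₁₁` for a constant `t`, then with `G := I⁰₁₁`:
`∂_{x₁}[(1+t²-e^{-4λ})G] = 2∂_{x₁}(e^{-2λ})G - 2t∂_{x₂}(e^{-2λ})G` and
`∂_{x₂}[(1+t²-e^{-4λ})G] = -2t∂_{x₁}(e^{-2λ})G - 2∂_{x₂}(e^{-2λ})G` on `U`. -/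
theorem isothermic_conservation_laws
    (U : Set RR2) (hU : IsOpen U)
    (Φ : RR2 → RR4) (lam : RR2 → ℝ) (n : RR2 → RR4)
    (h : IsConformalImmersionS3 U Φ lam n)
    (t : ℝ)
    (hccms : ∀ x ∈ U, meanCurv Φ lam n x = exp (-(4 * lam x)) * I011 Φ n x)
    (hiso : ∀ x ∈ U, I012 Φ n x = -t * I011 Φ n x) :
    ∀ x ∈ U,
      d1s (fun y => (1 + t ^ 2 - exp (-(4 * lam y))) * I011 Φ n y) x
        = 2 * d1s (fun y => exp (-(2 * lam y))) x * I011 Φ n x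
          - 2 * t * d2s (fun y => exp (-(2 * lam y))) x * I011 Φ n x ∧
      d2s (fun y => (1 + t ^ 2 - exp (-(4 * lam y))) * I011 Φ n y) x
        = -(2 * t) * d1s (fun y => exp (-(2 * lam y))) x * I011 Φ n x
          - 2 * d2s (fun y => exp (-(2 * lam y))) x * I011 Φ n x := by
  intro x hx
  obtain ⟨c1, c2⟩ := h.codazzi_of_isothermic_ccms hU hccms hiso hx
  have hA : DifferentiableAt ℝ (fun y => exp (-(2 * lam y))) x :=
    ((h.smooth_lam.differentiableAt_of_isOpen hU hx).const_mul 2).neg.exp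
  simp only [exp_neg_four_mul, d1s, d2s] at c1 c2 ⊢
  have hF : DifferentiableAt ℝ
      (fun y => 1 + t ^ 2 - exp (-(2 * lam y)) * exp (-(2 * lam y))) x := by fun_prop
  have hG := h.differentiableAt_I011 hU hx
  rw [fderiv_fun_mul_apply hF hG, fderiv_fun_mul_apply hF hG, fderiv_const_sub,
    neg_apply, neg_apply, fderiv_fun_mul_apply hA hA, fderiv_fun_mul_apply hA hA]
  exact ⟨by linear_combination t * c1 - (1 + exp (-(2 * lam x))) * c2,
    by linear_combination (1 - exp (-(2 * lam x))) * c1 + t * c2⟩
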